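/- Let α be strictly increasing with α_n > 1 and α_n → ∞. The following assertions are equivalent: (a) 0 ∉ σ(C; Λ₀(α)), i.e. the Cesàro operator C is bijective on Λ₀(α) with continuous inverse; (b) for each k ≥ 1 there exists l > k such that sup_{n≥1} ( log n − (1/k − 1/l)·α_n ) < ∞; (c) lim_{n→∞} (log n)/α_n = 0. -/

import Mathlib

open Filter Finset Topology

noncomputable section

/-- The weight `w_k(n) = e^{-alpha_n / k}`.  Indices are shifted by one: the natural
numbers `k n : Nat` represent the indices `k+1` and `n+1` (both running from `1`). -/
def wt (a : ℕ → ℝ) (k n : ℕ) : ℝ := Real.exp (-(a n) / ((k : ℝ) + 1))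

/-- Membership in the power series space of finite type `Λ₀(α)`:
`x ∈ Λ₀(α)` iff `w_k(n)|x_n| → 0` for every `k ≥ 1`. -/
def memLambda (a : ℕ → ℝ) (x : ℕ → ℂ) : Prop :=
  ∀ k : ℕ, Tendsto (fun n => wt a k n * ‖x n‖) atTop (𝓝 0)

/-- The norm `p_k(x) = sup_n w_k(n)|x_n|` generating the Fréchet topology of `Λ₀(α)`. -/
def pk (a : ℕ → ℝ) (k : ℕ) (x : ℕ → ℂ) : ℝ := ⨆ n : ℕ, wt a k n * ‖x n‖

/-- The discrete Cesàro operator `(C x)_n = (x_1 + ⋯ + x_n)/n` (0-indexed). -/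
def cesaro (x : ℕ → ℂ) : ℕ → ℂ := fun n => (∑ i ∈ Finset.range (n + 1), x i) / ((n : ℂ) + 1)

/-- `lam` belongs to the resolvent set of the Cesàro operator on `Λ₀(α)`:
`lam • I - C` has a linear inverse `T` on `Λ₀(α)` which is continuous for the
Fréchet topology generated by the norms `p_k`. -/
def InResolvent (a : ℕ → ℝ) (lam : ℂ) : Prop :=
  ∃ T : (ℕ → ℂ) → (ℕ → ℂ),
    (∀ x, memLambda a x → memLambda a (T x)) ∧
    (∀ x y, memLambda a x → memLambda a y → T (x + y) = T x + T y) ∧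
    (∀ (c : ℂ) (x), memLambda a x → T (c • x) = c • T x) ∧
    (∀ k : ℕ, ∃ l : ℕ, ∃ M : ℝ, 0 < M ∧ ∀ x, memLambda a x → pk a k (T x) ≤ M * pk a l x) ∧
    (∀ x, memLambda a x → T (lam • x - cesaro x) = x) ∧
    (∀ x, memLambda a x → lam • T x - cesaro (T x) = x)

/-!
The formal inverse of `C` is `(C⁻¹ y)_n = n y_n - (n-1) y_{n-1}`, so `C` is invertible on
`Λ₀(α)` exactly when `C⁻¹` is continuous there, i.e. when multiplication by `n` is: for every
`k` there are `l` and `C` with `n w_k(n) ≤ C w_l(n)`. Taking logarithms, this is (b).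
Conversely, a continuous inverse evaluated at the unit vector `e_N`, whose image under `C⁻¹`
has `N`-th coordinate `N`, yields exactly this weight comparison. Finally (b) says that
`log n ≤ M_ε + ε α_n` for arbitrarily small `ε > 0`, which is (c) since `α_n → ∞`.
-/

section Weights

variable {a : ℕ → ℝ}

lemma wt_pos (a : ℕ → ℝ) (k n : ℕ) : 0 < wt a k n := Real.exp_pos _

lemma wt_le_wt_of_le {n : ℕ} (ha : 0 ≤ a n) {k l : ℕ} (hkl : k ≤ l) : wt a k n ≤ wt a l n := by
  refine Real.exp_le_exp.2 ?_
  rw [neg_div, neg_div, neg_le_neg_iff]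
  gcongr

lemma wt_antitone (hmono : Monotone a) (k : ℕ) : Antitone (wt a k) := fun m n hmn => by
  unfold wt
  gcongr
  exact hmono hmn

lemma le_pk {x : ℕ → ℂ} (hx : memLambda a x) (k n : ℕ) : wt a k n * ‖x n‖ ≤ pk a k x :=
  le_ciSup (hx k).bddAbove_range n

lemma pk_neg (a : ℕ → ℝ) (k : ℕ) (x : ℕ → ℂ) : pk a k (-x) = pk a k x := by
  simp only [pk, Pi.neg_apply, norm_neg]

lemma memLambda.neg {x : ℕ → ℂ} (hx : memLambda a x) : memLambda a (-x) := by
  simpa only [memLambda, Pi.neg_apply, norm_neg] using hx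

lemma memLambda_single (a : ℕ → ℝ) (N : ℕ) : memLambda a (Pi.single N 1) := fun k =>
  tendsto_const_nhds.congr' <| by
    filter_upwards [eventually_gt_atTop N] with n hn
    simp [hn.ne']

lemma pk_single_le (a : ℕ → ℝ) (l N : ℕ) : pk a l (Pi.single N 1) ≤ wt a l N :=
  ciSup_le fun n => by
    rcases eq_or_ne n N with rfl | hn
    · simp
    · simp [hn, (wt_pos a l N).le]

end Weights

def WeightDominated (a : ℕ → ℝ) (k l : ℕ) : Prop :=
  ∃ C : ℝ, 0 < C ∧ ∀ n : ℕ, ((n : ℝ) + 1) * wt a k n ≤ C * wt a l n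

section WeightDominated

variable {a : ℕ → ℝ} {k l : ℕ}

lemma natCast_add_one_mul_wt_le_iff {C : ℝ} (hC : 0 < C) (n : ℕ) :
    ((n : ℝ) + 1) * wt a k n ≤ C * wt a l n ↔
      Real.log ((n : ℝ) + 1) - (1 / ((k : ℝ) + 1) - 1 / ((l : ℝ) + 1)) * a n ≤ Real.log C := by
  rw [← Real.log_le_log_iff (by positivity [wt_pos a k n]) (by positivity [wt_pos a l n]),
    Real.log_mul (by positivity) (wt_pos a k n).ne', Real.log_mul hC.ne' (wt_pos a l n).ne',
    wt, wt, Real.log_exp, Real.log_exp,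
    show (1 / ((k : ℝ) + 1) - 1 / ((l : ℝ) + 1)) * a n = -a n / (l + 1) - -a n / (k + 1) by ring]
  constructor <;> intro h <;> linarith

lemma weightDominated_iff :
    WeightDominated a k l ↔ ∃ M : ℝ, ∀ n : ℕ,
      Real.log ((n : ℝ) + 1) - (1 / ((k : ℝ) + 1) - 1 / ((l : ℝ) + 1)) * a n ≤ M := by
  constructor
  · rintro ⟨C, hC, h⟩
    exact ⟨Real.log C, fun n => (natCast_add_one_mul_wt_le_iff hC n).1 (h n)⟩
  · rintro ⟨M, h⟩
    refine ⟨Real.exp M, Real.exp_pos M, fun n => ?_⟩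
    rw [natCast_add_one_mul_wt_le_iff (Real.exp_pos M), Real.log_exp]
    exact h n

lemma WeightDominated.mono_right (ha : ∀ n, 0 ≤ a n) {l' : ℕ} (hll' : l ≤ l')
    (h : WeightDominated a k l) : WeightDominated a k l' := by
  obtain ⟨C, hC, h⟩ := h
  exact ⟨C, hC, fun n => (h n).trans (by gcongr; exact wt_le_wt_of_le (ha n) hll')⟩

end WeightDominated

/-- At `n = 0` the truncated `n - 1` is harmless: its coefficient vanishes. -/
def cesaroInv : (ℕ → ℂ) →ₗ[ℂ] (ℕ → ℂ) where
  toFun y n := ((n : ℂ) + 1) * y n - n * y (n - 1)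
  map_add' x y := by ext n; simp only [Pi.add_apply]; ring
  map_smul' c y := by ext n; simp only [Pi.smul_apply, smul_eq_mul, RingHom.id_apply]; ring

section CesaroInv

lemma cesaroInv_apply (y : ℕ → ℂ) (n : ℕ) :
    cesaroInv y n = ((n : ℂ) + 1) * y n - n * y (n - 1) := rfl

lemma cesaroInv_cesaro (x : ℕ → ℂ) : cesaroInv (cesaro x) = x := by
  ext n
  rcases n with _ | n
  · simp [cesaroInv_apply, cesaro]
  · simp only [cesaroInv_apply, cesaro, Nat.add_sub_cancel, Finset.sum_range_succ _ (n + 1)]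
    have hn : (n : ℂ) + 1 ≠ 0 := Nat.cast_add_one_ne_zero n
    have hn' : ((n + 1 : ℕ) : ℂ) + 1 ≠ 0 := Nat.cast_add_one_ne_zero (n + 1)
    field_simp
    push_cast
    ring

lemma cesaro_cesaroInv (y : ℕ → ℂ) : cesaro (cesaroInv y) = y := by
  ext n
  have htelescope : ∑ i ∈ Finset.range (n + 1), cesaroInv y i = ((n : ℂ) + 1) * y n := by
    induction n with
    | zero => simp [cesaroInv_apply]
    | succ n ih =>
      rw [Finset.sum_range_succ, ih, cesaroInv_apply, Nat.add_sub_cancel]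
      push_cast
      ring
  rw [cesaro, htelescope, mul_div_cancel_left₀ _ (Nat.cast_add_one_ne_zero n)]

lemma cesaroInv_single_self (N : ℕ) : cesaroInv (Pi.single N 1) N = (N : ℂ) + 1 := by
  rcases N with _ | N <;> simp [cesaroInv_apply]

lemma Complex.norm_natCast_add_one (n : ℕ) : ‖(n : ℂ) + 1‖ = (n : ℝ) + 1 := by
  exact_mod_cast Complex.norm_natCast (n + 1)

lemma norm_cesaroInv_le (y : ℕ → ℂ) (n : ℕ) :
    ‖cesaroInv y n‖ ≤ ((n : ℝ) + 1) * (‖y n‖ + ‖y (n - 1)‖) := by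
  calc ‖cesaroInv y n‖ ≤ ((n : ℝ) + 1) * ‖y n‖ + n * ‖y (n - 1)‖ := by
        rw [cesaroInv_apply, ← Complex.norm_natCast_add_one, ← Complex.norm_natCast,
          ← norm_mul, ← norm_mul]
        exact norm_sub_le _ _
    _ ≤ ((n : ℝ) + 1) * (‖y n‖ + ‖y (n - 1)‖) := by
        rw [mul_add]
        gcongr
        linarith

variable {a : ℕ → ℝ} {k l : ℕ} {C : ℝ}

lemma wt_mul_norm_cesaroInv_le (hmono : Monotone a) (hC : 0 ≤ C)
    (hdom : ∀ n : ℕ, ((n : ℝ) + 1) * wt a k n ≤ C * wt a l n) (y : ℕ → ℂ) (n : ℕ) :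
    wt a k n * ‖cesaroInv y n‖ ≤ C * (wt a l n * ‖y n‖ + wt a l (n - 1) * ‖y (n - 1)‖) :=
  calc wt a k n * ‖cesaroInv y n‖
      ≤ ((n : ℝ) + 1) * wt a k n * (‖y n‖ + ‖y (n - 1)‖) := by
        rw [mul_comm ((n : ℝ) + 1), mul_assoc]
        exact mul_le_mul_of_nonneg_left (norm_cesaroInv_le y n) (wt_pos a k n).le
    _ ≤ C * wt a l n * (‖y n‖ + ‖y (n - 1)‖) :=
        mul_le_mul_of_nonneg_right (hdom n) (by positivity)
    _ ≤ C * (wt a l n * ‖y n‖ + wt a l (n - 1) * ‖y (n - 1)‖) := by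
        rw [mul_assoc, mul_add]
        gcongr
        exact wt_antitone hmono l (Nat.sub_le n 1)

lemma memLambda_cesaroInv (hmono : Monotone a) (hdom : ∀ k, ∃ l, WeightDominated a k l)
    {x : ℕ → ℂ} (hx : memLambda a x) : memLambda a (cesaroInv x) := by
  intro k
  obtain ⟨l, C, hC, hCdom⟩ := hdom k
  have hlim : Tendsto (fun n => C * (wt a l n * ‖x n‖ + wt a l (n - 1) * ‖x (n - 1)‖))
      atTop (𝓝 0) := by
    simpa using ((hx l).add ((hx l).comp (tendsto_sub_atTop_nat 1))).const_mul C
  exact squeeze_zero (fun n => by positivity [wt_pos a k n])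
    (wt_mul_norm_cesaroInv_le hmono hC.le hCdom x) hlim

lemma pk_cesaroInv_le (hmono : Monotone a) (hC : 0 ≤ C)
    (hdom : ∀ n : ℕ, ((n : ℝ) + 1) * wt a k n ≤ C * wt a l n) {x : ℕ → ℂ}
    (hx : memLambda a x) : pk a k (cesaroInv x) ≤ 2 * C * pk a l x :=
  ciSup_le fun n =>
    calc wt a k n * ‖cesaroInv x n‖
        ≤ C * (wt a l n * ‖x n‖ + wt a l (n - 1) * ‖x (n - 1)‖) :=
          wt_mul_norm_cesaroInv_le hmono hC hdom x n
      _ ≤ C * (pk a l x + pk a l x) := by gcongr <;> exact le_pk hx l _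
      _ = 2 * C * pk a l x := by ring

end CesaroInv

section Resolvent

variable {a : ℕ → ℝ}

lemma inResolvent_zero_of_weightDominated (hmono : Monotone a)
    (hdom : ∀ k, ∃ l, WeightDominated a k l) : InResolvent a 0 := by
  refine ⟨fun x => cesaroInv (-x), fun x hx => memLambda_cesaroInv hmono hdom hx.neg,
    fun x y _ _ => by simp only [neg_add, map_add],
    fun c x _ => by simp only [← smul_neg, map_smul], fun k => ?_,
    fun x _ => by simp only [zero_smul, zero_sub, neg_neg, cesaroInv_cesaro],
    fun x _ => by rw [cesaro_cesaroInv, zero_smul, zero_sub, neg_neg]⟩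
  obtain ⟨l, C, hC, hCdom⟩ := hdom k
  refine ⟨l, 2 * C, by positivity, fun x hx => ?_⟩
  simpa only [pk_neg] using pk_cesaroInv_le hmono hC.le hCdom hx.neg

lemma exists_weightDominated_of_inResolvent_zero (h : InResolvent a 0) (k : ℕ) :
    ∃ l, WeightDominated a k l := by
  obtain ⟨T, hTmem, -, -, hTcont, -, hTright⟩ := h
  obtain ⟨l, M, hM, hbound⟩ := hTcont k
  refine ⟨l, M, hM, fun N => ?_⟩
  set e : ℕ → ℂ := Pi.single N 1
  have he := memLambda_single a N
  have hTe : T e = -cesaroInv e := by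
    have hce : cesaro (T e) = -e := neg_eq_iff_eq_neg.1 (by simpa using hTright e he)
    rw [← map_neg, ← hce, cesaroInv_cesaro]
  calc ((N : ℝ) + 1) * wt a k N = wt a k N * ‖T e N‖ := by
        rw [hTe, Pi.neg_apply, norm_neg, cesaroInv_single_self, Complex.norm_natCast_add_one,
          mul_comm]
    _ ≤ pk a k (T e) := le_pk (hTmem e he) k N
    _ ≤ M * pk a l e := hbound e he
    _ ≤ M * wt a l N := by gcongr; exact pk_single_le a l N

end Resolvent

lemma tendsto_div_nhds_zero_iff_forall_sub_mul_le {f g : ℕ → ℝ} (hf : ∀ n, 0 ≤ f n)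
    (hg : ∀ n, 0 < g n) (hg_top : Tendsto g atTop atTop) :
    Tendsto (fun n => f n / g n) atTop (𝓝 0) ↔ ∀ ε > 0, ∃ M : ℝ, ∀ n, f n - ε * g n ≤ M := by
  constructor
  · intro hlim ε hε
    have hev : ∀ᶠ n in atTop, f n - ε * g n ≤ 0 := by
      filter_upwards [hlim.eventually (eventually_le_nhds hε)] with n hn
      rw [div_le_iff₀ (hg n)] at hn
      linarith
    simpa [bddAbove_def] using (isBoundedUnder_of_eventually_le hev).bddAbove_range
  · intro hbdd
    refine tendsto_order.2 ⟨fun b hb => Eventually.of_forall fun n =>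
      hb.trans_le (div_nonneg (hf n) (hg n).le), fun ε hε => ?_⟩
    obtain ⟨M, hM⟩ := hbdd (ε / 2) (half_pos hε)
    filter_upwards [(tendsto_const_nhds (x := M) |>.div_atTop hg_top).eventually
      (eventually_lt_nhds (half_pos hε))] with n hn
    calc f n / g n ≤ M / g n + ε / 2 := by
          rw [div_add' _ _ _ (hg n).ne', div_le_div_iff_of_pos_right (hg n)]
          linarith [hM n]
      _ < ε := by linarith

lemma forall_pos_iff_forall_exists_lt {P : ℝ → Prop} (hP : Monotone P) :
    (∀ ε > 0, P ε) ↔ ∀ k : ℕ, ∃ l : ℕ, k < l ∧ P (1 / ((k : ℝ) + 1) - 1 / ((l : ℝ) + 1)) := by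
  constructor
  · intro h k
    refine ⟨k + 1, k.lt_succ_self, h _ (sub_pos.2 ?_)⟩
    gcongr
    linarith
  · intro h ε hε
    obtain ⟨k, hk⟩ := exists_nat_one_div_lt hε
    obtain ⟨l, -, hl⟩ := h k
    exact hP ((sub_le_self _ (by positivity)).trans hk.le) hl

/-- the following are equivalent: (a) `0 ∉ σ(C; Λ₀(α))`, i.e. `C` has a
continuous linear inverse on `Λ₀(α)`; (b) for each `k` there is `l > k` with
`sup_n (log n - (1/k - 1/l) α_n) < ∞`; (c) `(log n)/α_n → 0`. -/
theorem stmt6 (a : ℕ → ℝ) (hmono : StrictMono a) (h1 : ∀ n, 1 < a n)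
    (htop : Tendsto a atTop atTop) :
    [ InResolvent a 0,
      ∀ k : ℕ, ∃ l : ℕ, k < l ∧ ∃ M : ℝ, ∀ n : ℕ,
        Real.log ((n : ℝ) + 1) - (1 / ((k : ℝ) + 1) - 1 / ((l : ℝ) + 1)) * a n ≤ M,
      Tendsto (fun n : ℕ => Real.log ((n : ℝ) + 1) / a n) atTop (𝓝 0) ].TFAE := by
  have hpos : ∀ n, 0 < a n := fun n => one_pos.trans (h1 n)
  tfae_have 1 → 2 := fun h k => by
    obtain ⟨l, hl⟩ := exists_weightDominated_of_inResolvent_zero h k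
    exact ⟨max l (k + 1), by omega,
      weightDominated_iff.1 (hl.mono_right (fun n => (hpos n).le) (le_max_left l (k + 1)))⟩
  tfae_have 2 → 1 := fun h => inResolvent_zero_of_weightDominated hmono.monotone fun k =>
    let ⟨l, _, hl⟩ := h k
    ⟨l, weightDominated_iff.2 hl⟩
  tfae_have 2 ↔ 3 := by
    rw [tendsto_div_nhds_zero_iff_forall_sub_mul_le
      (fun n => Real.log_nonneg (by simp)) hpos htop]
    refine (forall_pos_iff_forall_exists_lt
      (P := fun ε => ∃ M : ℝ, ∀ n : ℕ, Real.log ((n : ℝ) + 1) - ε * a n ≤ M) ?_).symm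
    rintro ε ε' hεε' ⟨M, hM⟩
    exact ⟨M, fun n => le_trans (by gcongr; exact (hpos n).le) (hM n)⟩
  tfae_finish
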